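/- Uniqueness via b-contraction for the time-dependent constraint ODE: if v₁, v₂ ∈ W^{1,1}(0,T) are strong solutions of v'(t) + C(γ_r(u(t)), γ_l(u(t)); v(t)) ∋ 0 with the same continuous input u, then |b(v₁(t)) - b(v₂(t))| ≤ |b(v₁(0)) - b(v₂(0))| for all t ∈ [0,T]. -/
import Mathlib


open MeasureTheory

/-- The constraint graph C(p,q;·) of the interval [p,q]: ξ ∈ C(p,q;r). -/
def cMem (p q r ξ : ℝ) : Prop :=
  (r = p ∧ ξ ≤ 0) ∨ (p < r ∧ r < q ∧ ξ = 0) ∨ (r = q ∧ 0 ≤ ξ)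

lemma cMem_bounds {p q r ξ : ℝ} (hpq : p ≤ q) (h : cMem p q r ξ) : p ≤ r ∧ r ≤ q := by
  rcases h with ⟨h1, _⟩ | ⟨h1, h2, _⟩ | ⟨h1, _⟩ <;> constructor <;> linarith

lemma cMem_sign {p q r₁ r₂ ξ₁ ξ₂ : ℝ} (hpq : p ≤ q)
    (h₁ : cMem p q r₁ ξ₁) (h₂ : cMem p q r₂ ξ₂) (hlt : r₂ < r₁) :
    0 ≤ ξ₁ ∧ ξ₂ ≤ 0 := by
  obtain ⟨hp2, hq2⟩ := cMem_bounds hpq h₂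
  obtain ⟨hp1, hq1⟩ := cMem_bounds hpq h₁
  constructor
  · rcases h₁ with ⟨h1, _⟩ | ⟨_, _, h3⟩ | ⟨_, h3⟩ <;> [linarith; linarith; exact h3]
  · rcases h₂ with ⟨_, h3⟩ | ⟨_, _, h3⟩ | ⟨h1, _⟩ <;> [exact h3; linarith; linarith]

/-- Key comparison lemma: if v₂ t < v₁ t, then the order persists backwards on [0, t],
so v₁ is nonincreasing and v₂ nondecreasing on [0, t]. -/
lemma order_lemma (T : ℝ) (hT : 0 ≤ T) (p q : ℝ → ℝ) (hpq : ∀ t, p t ≤ q t)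
    (v₁ v₂ v₁' v₂' : ℝ → ℝ)
    (h₁int : IntervalIntegrable v₁' volume 0 T)
    (h₂int : IntervalIntegrable v₂' volume 0 T)
    (h₁ : ∀ t ∈ Set.Icc (0:ℝ) T, v₁ t = v₁ 0 + ∫ s in (0:ℝ)..t, v₁' s)
    (h₂ : ∀ t ∈ Set.Icc (0:ℝ) T, v₂ t = v₂ 0 + ∫ s in (0:ℝ)..t, v₂' s)
    (h₁c : ∀ᵐ t ∂volume, t ∈ Set.Icc (0:ℝ) T → cMem (p t) (q t) (v₁ t) (-(v₁' t)))
    (h₂c : ∀ᵐ t ∂volume, t ∈ Set.Icc (0:ℝ) T → cMem (p t) (q t) (v₂ t) (-(v₂' t))) :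
    ∀ t ∈ Set.Icc (0:ℝ) T, v₂ t < v₁ t → v₁ t ≤ v₁ 0 ∧ v₂ 0 ≤ v₂ t := by
  -- subinterval integrability
  have hsub : ∀ s ∈ Set.Icc (0:ℝ) T, ∀ r ∈ Set.Icc (0:ℝ) T,
      ∀ (f : ℝ → ℝ), IntervalIntegrable f volume 0 T → IntervalIntegrable f volume r s := by
    intro s hs r hr f hf
    apply hf.mono_set
    rw [Set.uIcc_of_le hT]
    exact Set.uIcc_subset_Icc hr hs
  -- difference formula
  have hdiff : ∀ (v v' : ℝ → ℝ), IntervalIntegrable v' volume 0 T →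
      (∀ t ∈ Set.Icc (0:ℝ) T, v t = v 0 + ∫ s in (0:ℝ)..t, v' s) →
      ∀ r ∈ Set.Icc (0:ℝ) T, ∀ s ∈ Set.Icc (0:ℝ) T,
      v s - v r = ∫ x in r..s, v' x := by
    intro v v' hint hrep r hr s hs
    rw [hrep s hs, hrep r hr]
    have := intervalIntegral.integral_interval_sub_left
      (hsub s hs 0 (Set.left_mem_Icc.2 hT) v' hint)
      (hsub r hr 0 (Set.left_mem_Icc.2 hT) v' hint)
    linarith [this]
  -- continuity of v₁, v₂ on [0,T]
  have hcont : ∀ (v v' : ℝ → ℝ), IntervalIntegrable v' volume 0 T →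
      (∀ t ∈ Set.Icc (0:ℝ) T, v t = v 0 + ∫ s in (0:ℝ)..t, v' s) →
      ContinuousOn v (Set.Icc 0 T) := by
    intro v v' hint hrep
    have h0 : (0:ℝ) ∈ Set.uIcc (0:ℝ) T := Set.left_mem_uIcc
    have := (intervalIntegral.continuousOn_primitive_interval' hint h0).const_smul (1:ℝ)
    have hc : ContinuousOn (fun t => v 0 + ∫ s in (0:ℝ)..t, v' s) (Set.Icc 0 T) := by
      have := intervalIntegral.continuousOn_primitive_interval' hint h0
      rw [Set.uIcc_of_le hT] at this
      exact continuousOn_const.add this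
    exact ContinuousOn.congr hc hrep
  have hc₁ := hcont v₁ v₁' h₁int h₁
  have hc₂ := hcont v₂ v₂' h₂int h₂
  intro t ht hlt
  -- Step 1: v₂ < v₁ on all of [0, t]
  have key : ∀ s ∈ Set.Icc (0:ℝ) t, v₂ s < v₁ s := by
    by_contra hcon
    push_neg at hcon
    obtain ⟨s₀, hs₀, hle⟩ := hcon
    set S : Set ℝ := {s ∈ Set.Icc (0:ℝ) t | v₁ s ≤ v₂ s} with hS
    have hSsub : S ⊆ Set.Icc 0 t := fun x hx => hx.1
    have hSsubT : S ⊆ Set.Icc 0 T := fun x hx =>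
      ⟨(hx.1).1, le_trans (hx.1).2 ht.2⟩
    have hne : S.Nonempty := ⟨s₀, hs₀, hle⟩
    have hIccT : Set.Icc (0:ℝ) t ⊆ Set.Icc 0 T := Set.Icc_subset_Icc le_rfl ht.2
    have hclosed : IsClosed S := by
      have : S = Set.Icc (0:ℝ) t ∩ (fun s => v₁ s - v₂ s) ⁻¹' Set.Iic 0 := by
        ext x; simp [hS, Set.mem_setOf_eq, sub_nonpos, and_comm]
      rw [this]
      exact ContinuousOn.preimage_isClosed_of_isClosed
        ((hc₁.sub hc₂).mono hIccT) isClosed_Icc isClosed_Iic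
    have hcomp : IsCompact S :=
      (isCompact_Icc.of_isClosed_subset hclosed hSsub)
    set s' := sSup S with hs'
    have hs'S : s' ∈ S := hcomp.sSup_mem hne
    have hs'T : s' ∈ Set.Icc (0:ℝ) T := hSsubT hs'S
    have hbdd : BddAbove S := ⟨t, fun x hx => (hSsub hx).2⟩
    have hs't : s' < t := by
      rcases lt_or_eq_of_le (hSsub hs'S).2 with h | h
      · exact h
      · exfalso; rw [h] at hs'S; exact absurd hs'S.2 (not_le.2 hlt)
    -- on (s', t], order is strict
    have hstrict : ∀ x ∈ Set.Ioc s' t, v₂ x < v₁ x := by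
      intro x hx
      by_contra hxc
      push_neg at hxc
      have : x ∈ S := ⟨⟨le_trans (hs'T).1 hx.1.le, hx.2⟩, hxc⟩
      exact absurd (le_csSup hbdd this) (not_le.2 hx.1)
    -- a.e. sign on Ioc s' t
    have hsign₁ : ∀ᵐ x ∂(volume.restrict (Set.Icc s' t)), x ≠ s' → v₁' x ≤ 0 := by
      rw [ae_restrict_iff' measurableSet_Icc]
      filter_upwards [h₁c, h₂c] with x hx1 hx2
      intro hxI hxne
      have hxIoc : x ∈ Set.Ioc s' t := ⟨lt_of_le_of_ne hxI.1 (Ne.symm hxne), hxI.2⟩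
      have hxT : x ∈ Set.Icc (0:ℝ) T := ⟨le_trans hs'T.1 hxIoc.1.le, le_trans hxIoc.2 ht.2⟩
      have := cMem_sign (hpq x) (hx1 hxT) (hx2 hxT) (hstrict x hxIoc)
      linarith [this.1]
    have hsign₂ : ∀ᵐ x ∂(volume.restrict (Set.Icc s' t)), x ≠ s' → 0 ≤ v₂' x := by
      rw [ae_restrict_iff' measurableSet_Icc]
      filter_upwards [h₁c, h₂c] with x hx1 hx2
      intro hxI hxne
      have hxIoc : x ∈ Set.Ioc s' t := ⟨lt_of_le_of_ne hxI.1 (Ne.symm hxne), hxI.2⟩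
      have hxT : x ∈ Set.Icc (0:ℝ) T := ⟨le_trans hs'T.1 hxIoc.1.le, le_trans hxIoc.2 ht.2⟩
      have := cMem_sign (hpq x) (hx1 hxT) (hx2 hxT) (hstrict x hxIoc)
      linarith [this.2]
    -- a.e., points differ from s'
    have hne' : ∀ᵐ x ∂(volume.restrict (Set.Icc s' t)), x ≠ s' := by
      refine ae_iff.2 ?_
      have hset : {x : ℝ | ¬ x ≠ s'} = {s'} := by ext x; simp
      rw [hset, Measure.restrict_apply (measurableSet_singleton _)]
      exact measure_mono_null Set.inter_subset_left (measure_singleton _)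
    have hint₁ : (∫ x in s'..t, v₁' x) ≤ 0 := by
      have hnn : 0 ≤ ∫ x in s'..t, -v₁' x := by
        apply intervalIntegral.integral_nonneg_of_ae_restrict hs't.le
        filter_upwards [hsign₁, hne'] with x h hn
        simpa using h hn
      rw [intervalIntegral.integral_neg] at hnn
      linarith
    have hint₂ : 0 ≤ (∫ x in s'..t, v₂' x) := by
      apply intervalIntegral.integral_nonneg_of_ae_restrict hs't.le
      filter_upwards [hsign₂, hne'] with x h hn
      exact h hn
    have hd₁ := hdiff v₁ v₁' h₁int h₁ s' hs'T t ht
    have hd₂ := hdiff v₂ v₂' h₂int h₂ s' hs'T t ht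
    have hss := hs'S.2
    linarith
  -- Step 2: monotonicity on [0, t]
  have h0T : (0:ℝ) ∈ Set.Icc (0:ℝ) T := Set.left_mem_Icc.2 hT
  have hsign₁ : ∀ᵐ x ∂(volume.restrict (Set.Icc (0:ℝ) t)), v₁' x ≤ 0 := by
    rw [ae_restrict_iff' measurableSet_Icc]
    filter_upwards [h₁c, h₂c] with x hx1 hx2
    intro hxI
    have hxT : x ∈ Set.Icc (0:ℝ) T := ⟨hxI.1, le_trans hxI.2 ht.2⟩
    have := cMem_sign (hpq x) (hx1 hxT) (hx2 hxT) (key x hxI)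
    linarith [this.1]
  have hsign₂ : ∀ᵐ x ∂(volume.restrict (Set.Icc (0:ℝ) t)), 0 ≤ v₂' x := by
    rw [ae_restrict_iff' measurableSet_Icc]
    filter_upwards [h₁c, h₂c] with x hx1 hx2
    intro hxI
    have hxT : x ∈ Set.Icc (0:ℝ) T := ⟨hxI.1, le_trans hxI.2 ht.2⟩
    have := cMem_sign (hpq x) (hx1 hxT) (hx2 hxT) (key x hxI)
    linarith [this.2]
  have hint₁ : (∫ x in (0:ℝ)..t, v₁' x) ≤ 0 := by
    have hnn : 0 ≤ ∫ x in (0:ℝ)..t, -v₁' x := by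
      apply intervalIntegral.integral_nonneg_of_ae_restrict ht.1
      filter_upwards [hsign₁] with x h
      simpa using h
    rw [intervalIntegral.integral_neg] at hnn
    linarith
  have hint₂ : 0 ≤ (∫ x in (0:ℝ)..t, v₂' x) :=
    intervalIntegral.integral_nonneg_of_ae_restrict ht.1 hsign₂
  have hd₁ := hdiff v₁ v₁' h₁int h₁ 0 h0T t ht
  have hd₂ := hdiff v₂ v₂' h₂int h₂ 0 h0T t ht
  constructor <;> linarith

/-- Uniqueness via b-contraction for the time-dependent constraint ODE:
strong solutions v₁, v₂ of v' + C(γ_r(u), γ_l(u); v) ∋ 0 with the same input u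
satisfy |b(v₁(t)) - b(v₂(t))| ≤ |b(v₁(0)) - b(v₂(0))|. -/
theorem b_contraction_for_constrained_ODE
    (T : ℝ) (hT : 0 < T) (u γr γl b : ℝ → ℝ)
    (hu : ContinuousOn u (Set.Icc 0 T))
    (hγrc : Continuous γr) (hγlc : Continuous γl)
    (hγrm : Monotone γr) (hγlm : Monotone γl) (hrl : ∀ x, γr x ≤ γl x)
    (hbm : Monotone b) (L : NNReal) (hbL : LipschitzWith L b)
    (v₁ v₂ v₁' v₂' : ℝ → ℝ)
    (h₁int : IntervalIntegrable v₁' volume 0 T)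
    (h₂int : IntervalIntegrable v₂' volume 0 T)
    (h₁ : ∀ t ∈ Set.Icc (0:ℝ) T, v₁ t = v₁ 0 + ∫ s in (0:ℝ)..t, v₁' s)
    (h₂ : ∀ t ∈ Set.Icc (0:ℝ) T, v₂ t = v₂ 0 + ∫ s in (0:ℝ)..t, v₂' s)
    (h₁c : ∀ᵐ t ∂volume, t ∈ Set.Icc (0:ℝ) T →
      cMem (γr (u t)) (γl (u t)) (v₁ t) (-(v₁' t)))
    (h₂c : ∀ᵐ t ∂volume, t ∈ Set.Icc (0:ℝ) T →
      cMem (γr (u t)) (γl (u t)) (v₂ t) (-(v₂' t))) :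
    ∀ t ∈ Set.Icc (0:ℝ) T, |b (v₁ t) - b (v₂ t)| ≤ |b (v₁ 0) - b (v₂ 0)| := by
  have O₁ := order_lemma T hT.le (fun t => γr (u t)) (fun t => γl (u t))
    (fun t => hrl (u t)) v₁ v₂ v₁' v₂' h₁int h₂int h₁ h₂ h₁c h₂c
  have O₂ := order_lemma T hT.le (fun t => γr (u t)) (fun t => γl (u t))
    (fun t => hrl (u t)) v₂ v₁ v₂' v₁' h₂int h₁int h₂ h₁ h₂c h₁c
  intro t ht
  rcases lt_trichotomy (v₂ t) (v₁ t) with h | h | h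
  · obtain ⟨ha, hb⟩ := O₁ t ht h
    have h1 : b (v₂ t) ≤ b (v₁ t) := hbm h.le
    have h2 : b (v₁ t) ≤ b (v₁ 0) := hbm ha
    have h3 : b (v₂ 0) ≤ b (v₂ t) := hbm hb
    rw [abs_of_nonneg (by linarith)]
    exact le_trans (by linarith) (le_abs_self _)
  · rw [h]
    simp [abs_nonneg]
  · obtain ⟨ha, hb⟩ := O₂ t ht h
    have h1 : b (v₁ t) ≤ b (v₂ t) := hbm h.le
    have h2 : b (v₂ t) ≤ b (v₂ 0) := hbm ha
    have h3 : b (v₁ 0) ≤ b (v₁ t) := hbm hb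
    rw [abs_sub_comm, abs_of_nonneg (by linarith), abs_sub_comm]
    exact le_trans (by linarith) (le_abs_self _)
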